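/- arXiv:2603.19502 — 2 statements merged into one kernel-verified Lean document; each statement's English description precedes it below -/
import Mathlib

section
/- Let γ : [0,1] → ℝ² be a continuous path, p ∈ ℝ², and suppose p ε-interrupts γ, i.e., ||γ(t) - p|| ≥ 2 - ε for all t. Define the clearance path γ̃ by: if ||γ(t) - p|| ≥ 2 then γ̃(t) = p, and otherwise γ̃(t) is the point on the ray from γ(t) through p at distance exactly 2 from γ(t). Then γ̃ is continuous, γ̃(t) ∈ closed disk of radius ε around p for all t, and ||γ(t) - γ̃(t)|| ≥ 2 for all t. -/
/-- Clearance path. If `γ` is continuous on `[0,1]` and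
`p` ε-interrupts `γ` (i.e. `‖γ t - p‖ ≥ 2 - ε` for all `t ∈ [0,1]`), then the
clearance path `γ̃`, defined by `γ̃ t = p` when `‖γ t - p‖ ≥ 2` and otherwise
the point of the ray from `γ t` through `p` at distance exactly `2` from
`γ t`, is continuous on `[0,1]`, stays in the closed disk `D_ε(p)`, and
satisfies `‖γ t - γ̃ t‖ ≥ 2` for all `t ∈ [0,1]`. -/
theorem clearance_path (ε : ℝ) (hε0 : 0 ≤ ε) (hε1 : ε ≤ 1)
    (p : EuclideanSpace ℝ (Fin 2)) (γ γt : ℝ → EuclideanSpace ℝ (Fin 2))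
    (hγ : ContinuousOn γ (Set.Icc 0 1))
    (hint : ∀ t ∈ Set.Icc (0:ℝ) 1, 2 - ε ≤ ‖γ t - p‖)
    (hdef : ∀ t ∈ Set.Icc (0:ℝ) 1,
      γt t = if 2 ≤ ‖γ t - p‖ then p
             else γ t + (2 / ‖p - γ t‖) • (p - γ t)) :
    ContinuousOn γt (Set.Icc 0 1) ∧
    (∀ t ∈ Set.Icc (0:ℝ) 1, γt t ∈ Metric.closedBall p ε) ∧
    (∀ t ∈ Set.Icc (0:ℝ) 1, 2 ≤ ‖γ t - γt t‖) := by
  have hr1 : ∀ t ∈ Set.Icc (0:ℝ) 1, (1:ℝ) ≤ ‖γ t - p‖ := by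
    intro t ht; linarith [hint t ht]
  have hrpos : ∀ t ∈ Set.Icc (0:ℝ) 1, (0:ℝ) < ‖γ t - p‖ := by
    intro t ht; linarith [hr1 t ht]
  set g : ℝ → EuclideanSpace ℝ (Fin 2) :=
    fun t => p + ((min 0 (‖γ t - p‖ - 2)) / ‖γ t - p‖) • (γ t - p) with hg
  have heq : ∀ t ∈ Set.Icc (0:ℝ) 1, γt t = g t := by
    intro t ht
    simp only [hdef t ht, hg]
    have hr0 : ‖γ t - p‖ ≠ 0 := ne_of_gt (hrpos t ht)
    split_ifs with h
    · have : min 0 (‖γ t - p‖ - 2) = 0 := min_eq_left (by linarith)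
      simp [this]
    · push_neg at h
      have : min 0 (‖γ t - p‖ - 2) = ‖γ t - p‖ - 2 := min_eq_right (by linarith)
      rw [this, norm_sub_rev p (γ t)]
      have h1 : (‖γ t - p‖ - 2) / ‖γ t - p‖ = 1 - 2 / ‖γ t - p‖ := by
        field_simp
      rw [h1]
      module
  have hcg : ContinuousOn g (Set.Icc 0 1) := by
    have hc1 : ContinuousOn (fun t => ‖γ t - p‖) (Set.Icc 0 1) :=
      (hγ.sub continuousOn_const).norm
    have hc2 : ContinuousOn (fun t => min 0 (‖γ t - p‖ - 2)) (Set.Icc 0 1) :=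
      (continuous_const.min (continuous_id.sub continuous_const)).comp_continuousOn hc1
    exact continuousOn_const.add
      ((hc2.div hc1 (fun t ht => ne_of_gt (hrpos t ht))).smul
        (hγ.sub continuousOn_const))
  refine ⟨hcg.congr heq, ?_, ?_⟩
  · intro t ht
    rw [Metric.mem_closedBall, dist_eq_norm, heq t ht, hg]
    simp only [add_sub_cancel_left]
    rw [norm_smul, Real.norm_eq_abs, abs_div, abs_of_pos (hrpos t ht),
      div_mul_cancel₀ _ (ne_of_gt (hrpos t ht))]
    rcases le_or_gt 2 ‖γ t - p‖ with h | h
    · rw [min_eq_left (by linarith)]; simpa using hε0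
    · rw [min_eq_right (by linarith), abs_of_nonpos (by linarith)]
      linarith [hint t ht]
  · intro t ht
    rw [heq t ht, hg]
    have : γ t - (p + ((min 0 (‖γ t - p‖ - 2)) / ‖γ t - p‖) • (γ t - p))
        = (1 - (min 0 (‖γ t - p‖ - 2)) / ‖γ t - p‖) • (γ t - p) := by
      module
    rw [this, norm_smul, Real.norm_eq_abs]
    have hr0 : ‖γ t - p‖ ≠ 0 := ne_of_gt (hrpos t ht)
    have hm : min 0 (‖γ t - p‖ - 2) ≤ 0 := min_le_left _ _
    have h1 : (0:ℝ) ≤ 1 - (min 0 (‖γ t - p‖ - 2)) / ‖γ t - p‖ := by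
      have : (min 0 (‖γ t - p‖ - 2)) / ‖γ t - p‖ ≤ 0 :=
        div_nonpos_of_nonpos_of_nonneg hm (le_of_lt (hrpos t ht))
      linarith
    rw [abs_of_nonneg h1, sub_mul, one_mul, div_mul_cancel₀ _ hr0]
    rcases le_or_gt 2 ‖γ t - p‖ with h | h
    · rw [min_eq_left (by linarith)]; linarith
    · rw [min_eq_right (by linarith)]; linarith
end

section
/- Consider a strip W = ℝ × [0, 4 - ε] ⊆ ℝ² for some 0 < ε < 2, and two continuous paths a, b : [0,1] → ℝ × [1, 3 - ε] (the free space for unit disks in the strip) with a(0)ₓ > b(0)ₓ and a(1)ₓ < b(1)ₓ (where ·ₓ denotes the x-coordinate). Then there exists t ∈ [0,1] with a(t)ₓ = b(t)ₓ, and at that time ||a(t) - b(t)|| ≤ 2 - ε < 2; hence two unit-disk robots cannot swap their order along the strip without colliding. -/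
/-- In the strip `ℝ × [0, 4-ε]` with `0 < ε < 2`, two unit-disk
robots whose centers move continuously in the free space `ℝ × [1, 3-ε]`
cannot swap their order along the strip: if `a` starts to the right of `b`
and ends to its left, then at some time `t` their x-coordinates coincide, and
then `‖a t - b t‖ ≤ 2 - ε < 2`, i.e. they collide. -/
theorem strip_no_swap (ε : ℝ) (hε0 : 0 < ε) (hε2 : ε < 2)
    (a b : ℝ → EuclideanSpace ℝ (Fin 2))
    (ha : ContinuousOn a (Set.Icc 0 1)) (hb : ContinuousOn b (Set.Icc 0 1))
    (haf : ∀ t ∈ Set.Icc (0:ℝ) 1, 1 ≤ a t 1 ∧ a t 1 ≤ 3 - ε)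
    (hbf : ∀ t ∈ Set.Icc (0:ℝ) 1, 1 ≤ b t 1 ∧ b t 1 ≤ 3 - ε)
    (h0 : a 0 0 > b 0 0) (h1 : a 1 0 < b 1 0) :
    ∃ t ∈ Set.Icc (0:ℝ) 1, a t 0 = b t 0 ∧
      ‖a t - b t‖ ≤ 2 - ε ∧ ‖a t - b t‖ < 2 := by
  set f : ℝ → ℝ := fun t => a t 0 - b t 0 with hf
  have hfc : ContinuousOn f (Set.Icc 0 1) := by
    apply ContinuousOn.sub
    · exact (EuclideanSpace.proj (0 : Fin 2)).continuous.comp_continuousOn ha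
    · exact (EuclideanSpace.proj (0 : Fin 2)).continuous.comp_continuousOn hb
  have h01 : (0:ℝ) ≤ 1 := by norm_num
  obtain ⟨t, ht, htf⟩ := intermediate_value_Icc' h01 hfc
    (Set.mem_Icc.2 ⟨by simp [hf]; linarith, by simp [hf]; linarith⟩ :
      (0:ℝ) ∈ Set.Icc (f 1) (f 0))
  have heq : a t 0 = b t 0 := by simp [hf] at htf; linarith
  refine ⟨t, ht, heq, ?_⟩
  have h1a := haf t ht
  have h1b := hbf t ht
  have hnorm : ‖a t - b t‖ = |a t 1 - b t 1| := by
    rw [EuclideanSpace.norm_eq]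
    have : ∀ i : Fin 2, (a t - b t) i = a t i - b t i := fun i => rfl
    rw [Fin.sum_univ_two, this 0, this 1, heq]
    simp [Real.sqrt_sq_eq_abs]
  rw [hnorm]
  constructor
  · rw [abs_le]; constructor <;> linarith
  · rw [abs_lt]; constructor <;> linarith
end
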